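/- (Tanny's representation) For all integers n ≥ 1 and 0 ≤ k ≤ n-1, the Eulerian number E(n,k) satisfies E(n,k)/n! = P(⌊U₁ + U₂ + ... + U_n⌋ = k), where U₁,...,U_n are i.i.d. uniform random variables on [0,1]. -/

import Mathlib

/-!
Put `Wₙ(x) = ∑ⱼ (-1)ʲ C(n,j) (x - j)₊ⁿ`. Since `Wₙ₊₁(x) = (n + 1) ∫₀¹ Wₙ(x - t) dt`, conditioning on
one coordinate shows by induction that `P(U₁ + ⋯ + Uₙ < x) = Wₙ(x) / n!`, so the probability that
the sum has integer part `k` is `(Wₙ(k + 1) - Wₙ(k)) / n!`. These differences are the Eulerian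
numbers: they equal `1` at `k = 0`, and they obey the Eulerian recurrence because
`(x - j)₊ⁿ⁺¹ = (x - j) (x - j)₊ⁿ` and Pascal's rule give
`Wₙ₊₁(x) = x (Wₙ(x) - Wₙ(x - 1)) + (n + 1) Wₙ(x - 1)`.
-/

open MeasureTheory

/-- Eulerian numbers (number of permutations of `n` with `k` descents). -/
def Eul : ℕ → ℕ → ℕ
  | 0, 0 => 1
  | 0, _ + 1 => 0
  | n + 1, 0 => Eul n 0
  | n + 1, k + 1 => (n - k) * Eul n k + (k + 2) * Eul n (k + 1)

open Finset

theorem Eul_eq_zero_of_lt {n k : ℕ} (h : n < k) : Eul n k = 0 := by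
  induction n generalizing k with
  | zero => obtain ⟨k, rfl⟩ := Nat.exists_eq_add_one_of_ne_zero h.ne'; rfl
  | succ n ih =>
    obtain ⟨k, rfl⟩ := Nat.exists_eq_add_one_of_ne_zero (Nat.ne_zero_of_lt h)
    rw [Eul, Nat.sub_eq_zero_of_le (by omega), ih (k := k + 1) (by omega)]
    simp

section AlternatingChoose

variable {R : Type*} [CommRing R]

theorem sum_range_succ_alternating_choose (n : ℕ) (f : ℕ → R) :
    ∑ j ∈ range (n + 2), (-1) ^ j * ((n + 1).choose j : R) * f j
      = ∑ j ∈ range (n + 1), (-1) ^ j * (n.choose j : R) * (f j - f (j + 1)) := by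
  set g : ℕ → R := fun j => (-1) ^ j * (n.choose j : R) * f j
  have hg : ∑ j ∈ range (n + 1), g (j + 1) = ∑ j ∈ range (n + 1), g j - g 0 := by
    rw [eq_sub_iff_add_eq, ← sum_range_succ', sum_range_succ]
    simp [g]
  rw [sum_range_succ']
  simp only [Nat.choose_succ_succ', Nat.cast_add, mul_add, add_mul, sum_add_distrib]
  simp only [g, pow_succ, mul_sub, sum_sub_distrib] at hg ⊢
  rw [hg]
  simp only [pow_zero, Nat.choose_zero_right, Nat.cast_one, neg_mul, one_mul, mul_neg, mul_one,
    sum_neg_distrib]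
  ring

theorem sum_range_succ_alternating_choose_mul_self (n : ℕ) (f : ℕ → R) :
    ∑ j ∈ range (n + 2), (-1) ^ j * ((n + 1).choose j : R) * j * f j
      = -(n + 1) * ∑ j ∈ range (n + 1), (-1) ^ j * (n.choose j : R) * f (j + 1) := by
  rw [sum_range_succ', mul_sum]
  simp only [Nat.cast_zero, mul_zero, zero_mul, add_zero]
  refine sum_congr rfl fun j _ => ?_
  have h := congrArg (Nat.cast : ℕ → R) (Nat.add_one_mul_choose_eq n j)
  push_cast at h ⊢
  linear_combination (-1) ^ j * f (j + 1) * h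

end AlternatingChoose

/-- `x ↦ x₊ⁿ`, taken to vanish at `x = 0` even for `n = 0`: this matches the strict inequality
in `cubeSumLt` below, so that the case `n = 0` needs no exception. -/
noncomputable def truncPow (n : ℕ) : ℝ → ℝ := (Set.Ioi 0).indicator (· ^ n)

section truncPow

variable {n : ℕ} {x : ℝ}

theorem truncPow_of_pos (hx : 0 < x) : truncPow n x = x ^ n :=
  Set.indicator_of_mem hx _

theorem truncPow_of_nonpos (hx : x ≤ 0) : truncPow n x = 0 :=
  Set.indicator_of_notMem (not_lt.2 hx) _

theorem truncPow_succ : truncPow (n + 1) x = x * truncPow n x := by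
  rcases lt_or_ge 0 x with hx | hx
  · rw [truncPow_of_pos hx, truncPow_of_pos hx, pow_succ']
  · rw [truncPow_of_nonpos hx, truncPow_of_nonpos hx, mul_zero]

theorem truncPow_nonneg : 0 ≤ truncPow n x :=
  Set.indicator_nonneg (fun y (hy : 0 < y) => pow_nonneg hy.le n) x

theorem monotone_truncPow : Monotone (truncPow n) := by
  intro x y hxy
  rcases le_or_gt x 0 with hx | hx
  · exact (truncPow_of_nonpos hx).trans_le truncPow_nonneg
  · rw [truncPow_of_pos hx, truncPow_of_pos (hx.trans_le hxy)]
    exact pow_le_pow_left₀ hx.le hxy n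

theorem truncPow_succ_eq_max_pow : truncPow (n + 1) x = max x 0 ^ (n + 1) := by
  rcases lt_or_ge 0 x with hx | hx
  · rw [truncPow_of_pos hx, max_eq_left hx.le]
  · rw [truncPow_of_nonpos hx, max_eq_right hx, zero_pow n.succ_ne_zero]

theorem continuous_truncPow_succ : Continuous (truncPow (n + 1)) := by
  simp_rw [funext fun x => @truncPow_succ_eq_max_pow n x]
  fun_prop

theorem hasDerivAt_truncPow_succ (hx : x ≠ 0) :
    HasDerivAt (truncPow (n + 1)) ((n + 1) * truncPow n x) x := by
  rcases hx.lt_or_gt with hx | hx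
  · rw [truncPow_of_nonpos hx.le, mul_zero]
    refine (hasDerivAt_const x 0).congr_of_eventuallyEq ?_
    filter_upwards [Iio_mem_nhds hx] with y hy using truncPow_of_nonpos (le_of_lt hy)
  · rw [truncPow_of_pos hx]
    refine (hasDerivAt_pow (n + 1) x).congr_of_eventuallyEq ?_ |>.congr_deriv (by push_cast; ring)
    filter_upwards [Ioi_mem_nhds hx] with y hy using truncPow_of_pos hy

theorem integral_truncPow (a b : ℝ) :
    ∫ s in a..b, truncPow n s = (truncPow (n + 1) b - truncPow (n + 1) a) / (n + 1) := by
  have hn : (n + 1 : ℝ) ≠ 0 := by positivity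
  rw [integral_eq_of_hasDerivAt_off_countable (fun s => truncPow (n + 1) s / (n + 1))
    (truncPow n) (Set.countable_singleton 0) (continuous_truncPow_succ.div_const _).continuousOn
    (fun s hs => ?_) (monotone_truncPow.intervalIntegrable), sub_div]
  exact ((hasDerivAt_truncPow_succ hs.2).div_const _).congr_deriv (mul_div_cancel_left₀ _ hn)

end truncPow

theorem intervalIntegrable_truncPow_sub (n : ℕ) (x a b : ℝ) :
    IntervalIntegrable (fun t => truncPow n (x - t)) volume a b :=
  (monotone_truncPow.comp_antitone fun _ _ h => sub_le_sub_left h x).intervalIntegrable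

/-- `n!` times the distribution function `x ↦ P(U₁ + ⋯ + Uₙ < x)` of the Irwin–Hall law. -/
noncomputable def irwinHall (n : ℕ) (x : ℝ) : ℝ :=
  ∑ j ∈ range (n + 1), (-1) ^ j * (n.choose j : ℝ) * truncPow n (x - j)

theorem irwinHall_zero (x : ℝ) : irwinHall 0 x = truncPow 0 x := by
  simp [irwinHall]

theorem irwinHall_of_nonpos (n : ℕ) {x : ℝ} (hx : x ≤ 0) : irwinHall n x = 0 :=
  sum_eq_zero fun j _ => by
    rw [truncPow_of_nonpos (sub_nonpos.2 (hx.trans j.cast_nonneg)), mul_zero]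

theorem irwinHall_one (n : ℕ) : irwinHall n 1 = 1 := by
  rw [irwinHall, sum_range_succ', sum_eq_zero fun j _ => ?_]
  · simp [truncPow_of_pos]
  · rw [truncPow_of_nonpos (by push_cast; linarith [j.cast_nonneg (α := ℝ)]), mul_zero]

theorem irwinHall_succ (n : ℕ) (x : ℝ) :
    irwinHall (n + 1) x
      = x * (irwinHall n x - irwinHall n (x - 1)) + (n + 1) * irwinHall n (x - 1) := by
  have hshift : ∀ j : ℕ, x - ((j + 1 : ℕ) : ℝ) = x - 1 - j := fun j => by push_cast; ring
  calc irwinHall (n + 1) x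
      = x * ∑ j ∈ range (n + 2), (-1) ^ j * ((n + 1).choose j : ℝ) * truncPow n (x - j)
        - ∑ j ∈ range (n + 2), (-1) ^ j * ((n + 1).choose j : ℝ) * j * truncPow n (x - j) := by
        simp only [irwinHall, truncPow_succ, mul_sum, ← sum_sub_distrib]
        exact sum_congr rfl fun j _ => by ring
    _ = _ := by
        rw [sum_range_succ_alternating_choose, sum_range_succ_alternating_choose_mul_self]
        simp only [irwinHall, hshift, mul_sub, sum_sub_distrib]
        ring

theorem Eul_eq_irwinHall_sub (n k : ℕ) :
    (Eul n k : ℝ) = irwinHall n (k + 1) - irwinHall n k := by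
  induction n generalizing k with
  | zero =>
    cases k with
    | zero => simp [Eul, irwinHall_one, irwinHall_of_nonpos]
    | succ k =>
      simp [Eul, irwinHall_zero, truncPow_of_pos (by positivity : (0 : ℝ) < k + 1 + 1),
        truncPow_of_pos (Nat.cast_add_one_pos k)]
  | succ n ih =>
    cases k with
    | zero => simp [Eul, ih, irwinHall_one, irwinHall_of_nonpos]
    | succ k =>
      have hcoef : ((n - k : ℕ) : ℝ) * Eul n k = ((n : ℝ) - k) * Eul n k := by
        rcases le_or_gt k n with h | h
        · rw [Nat.cast_sub h]
        · simp [Eul_eq_zero_of_lt h]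
      simp only [Eul, Nat.cast_add, Nat.cast_mul]
      rw [hcoef, ih k, ih (k + 1), irwinHall_succ, irwinHall_succ]
      push_cast
      ring_nf

theorem intervalIntegrable_irwinHall_sub (n : ℕ) (x a b : ℝ) :
    IntervalIntegrable (fun t => irwinHall n (x - t)) volume a b := by
  have h : (fun t => irwinHall n (x - t)) = ∑ j ∈ range (n + 1),
      fun t => (-1) ^ j * (n.choose j : ℝ) * truncPow n (x - j - t) := by
    funext t
    simp [irwinHall, sub_right_comm x t]
  rw [h]
  exact IntervalIntegrable.sum _ fun j _ => (intervalIntegrable_truncPow_sub n _ a b).const_mul _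

theorem integral_irwinHall_sub (n : ℕ) (x : ℝ) :
    ∫ t in (0 : ℝ)..1, irwinHall n (x - t) = irwinHall (n + 1) x / (n + 1) := by
  simp only [irwinHall]
  rw [intervalIntegral.integral_finsetSum fun j _ => by
      simpa only [sub_right_comm x] using (intervalIntegrable_truncPow_sub n (x - j) 0 1).const_mul _,
    sum_range_succ_alternating_choose, sum_div]
  refine sum_congr rfl fun j _ => ?_
  simp only [intervalIntegral.integral_const_mul, fun t : ℝ => sub_right_comm x t (j : ℝ)]
  rw [intervalIntegral.integral_comp_sub_left (fun s => truncPow n s), integral_truncPow]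
  push_cast
  ring_nf

theorem irwinHall_nonneg (n : ℕ) (x : ℝ) : 0 ≤ irwinHall n x := by
  induction n generalizing x with
  | zero => rw [irwinHall_zero]; exact truncPow_nonneg
  | succ n ih =>
    have h := integral_irwinHall_sub n x
    rw [eq_div_iff (by positivity)] at h
    rw [← h]
    exact mul_nonneg (intervalIntegral.integral_nonneg zero_le_one fun t _ => ih _) (by positivity)

def cubeSumLt (n : ℕ) (x : ℝ) : Set (Fin n → ℝ) :=
  {u | (∀ i, u i ∈ Set.Icc (0 : ℝ) 1) ∧ ∑ i, u i < x}

theorem measurableSet_cubeSumLt (n : ℕ) (x : ℝ) : MeasurableSet (cubeSumLt n x) := by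
  unfold cubeSumLt
  measurability

theorem volume_cubeSumLt_succ (n : ℕ) (x : ℝ) :
    volume (cubeSumLt (n + 1) x) = ∫⁻ t in Set.Icc 0 1, volume (cubeSumLt n (x - t)) := by
  let e := MeasurableEquiv.piFinSuccAbove (fun _ : Fin (n + 1) => ℝ) 0
  have he : e.symm ⁻¹' cubeSumLt (n + 1) x
      = {p : ℝ × (Fin n → ℝ) | p.1 ∈ Set.Icc 0 1 ∧ p.2 ∈ cubeSumLt n (x - p.1)} := by
    ext ⟨t, y⟩
    simp [e, cubeSumLt, Fin.forall_fin_succ, Fin.sum_univ_succ, lt_sub_iff_add_lt', and_assoc]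
  have hmeas : MeasurableSet (e.symm ⁻¹' cubeSumLt (n + 1) x) :=
    e.symm.measurable (measurableSet_cubeSumLt _ _)
  rw [← (volume_preserving_piFinSuccAbove (fun _ => ℝ) 0).symm.measure_preimage_equiv,
    Measure.volume_eq_prod, Measure.prod_apply hmeas, he, ← lintegral_indicator measurableSet_Icc]
  refine lintegral_congr fun t => ?_
  by_cases ht : t ∈ Set.Icc (0 : ℝ) 1
  · simp only [Set.preimage_ofPred_eq, ht, true_and, Set.ofPred_mem_eq, Set.indicator_of_mem]
  · simp only [Set.preimage_ofPred_eq, ht, false_and, Set.ofPred_false, measure_empty,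
      Set.indicator_of_notMem, not_false_eq_true]

theorem volume_cubeSumLt (n : ℕ) (x : ℝ) :
    volume (cubeSumLt n x) = ENNReal.ofReal (irwinHall n x / n.factorial) := by
  induction n generalizing x with
  | zero =>
    rw [irwinHall_zero, Nat.factorial_zero, Nat.cast_one, div_one]
    by_cases hx : 0 < x
    · simp [cubeSumLt, hx, truncPow_of_pos, volume_pi]
    · simp [cubeSumLt, hx, truncPow_of_nonpos (not_lt.1 hx)]
  | succ n ih =>
    have hint := (intervalIntegrable_irwinHall_sub n x 0 1).div_const (n.factorial : ℝ)
    rw [intervalIntegrable_iff_integrableOn_Icc_of_le zero_le_one] at hint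
    simp_rw [volume_cubeSumLt_succ, ih]
    rw [← ofReal_integral_eq_lintegral_ofReal hint
      (ae_of_all _ fun t => div_nonneg (irwinHall_nonneg n _) (Nat.cast_nonneg _)),
      integral_Icc_eq_integral_Ioc, ← intervalIntegral.integral_of_le zero_le_one,
      intervalIntegral.integral_div, integral_irwinHall_sub, Nat.factorial_succ]
    push_cast
    rw [div_div]

theorem tanny_representation_general (n k : ℕ) :
    volume {u : Fin n → ℝ | (∀ i, u i ∈ Set.Icc (0 : ℝ) 1) ∧ ⌊∑ i, u i⌋ = (k : ℤ)}
      = ENNReal.ofReal ((Eul n k : ℝ) / n.factorial) := by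
  have hdiff : {u : Fin n → ℝ | (∀ i, u i ∈ Set.Icc (0 : ℝ) 1) ∧ ⌊∑ i, u i⌋ = (k : ℤ)}
      = cubeSumLt n (k + 1) \ cubeSumLt n k := by
    ext u
    simp only [cubeSumLt, Set.mem_ofPred_eq, Set.mem_sdiff, Int.floor_eq_iff, Int.cast_natCast,
      not_and, not_lt]
    tauto
  have hsub : cubeSumLt n k ⊆ cubeSumLt n (k + 1) :=
    fun u ⟨hu, hsum⟩ => ⟨hu, hsum.trans (lt_add_one _)⟩
  rw [hdiff, measure_sdiff hsub (measurableSet_cubeSumLt n k).nullMeasurableSet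
      (by simp [volume_cubeSumLt]), volume_cubeSumLt, volume_cubeSumLt,
    ← ENNReal.ofReal_sub _ (div_nonneg (irwinHall_nonneg n k) (Nat.cast_nonneg _)), ← sub_div,
    Eul_eq_irwinHall_sub]

/-- Tanny's representation: `E(n,k)/n!` is the probability that the integer part of a sum
of `n` i.i.d. uniform random variables on `[0,1]` equals `k`. -/
theorem tanny_representation (n k : ℕ) (hn : 1 ≤ n) (hk : k ≤ n - 1) :
    volume {u : Fin n → ℝ | (∀ i, u i ∈ Set.Icc (0 : ℝ) 1) ∧ ⌊∑ i, u i⌋ = (k : ℤ)}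
      = ENNReal.ofReal ((Eul n k : ℝ) / n.factorial) :=
  tanny_representation_general n k
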